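/- arXiv:1011.3379 — 2 statements merged into one kernel-verified Lean document; each statement's English description precedes it below -/
import Mathlib

section
/- For i ∈ {0,1}, the limit rᵢ := lim_{p→i} (m̃(p)/π(p)) · λκᵢ exists in [0,∞] and satisfies: rᵢ ∈ (0,∞) if 2|μ(i)| < |v'(i)| and λwᵢ is not identically zero on [0,1]; rᵢ = ∞ if 2|μ(i)| ≥ |v'(i)| and λwᵢ is not identically zero on [0,1]; and rᵢ = 0 if λwᵢ is identically zero on [0,1]. -/
open MeasureTheory Set Filter Topology Asymptotics

/-- The infinitesimal generator of the forward jump-diffusion process (Eq. (7) of the paper). -/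
noncomputable def fwdGen (lam : ℝ) (v mu w0 : ℝ → ℝ) (phi : ℝ → ℝ) (p : ℝ) : ℝ :=
  1 / 2 * v p * deriv (deriv phi) p + mu p * deriv phi p
    + lam * w0 p * (phi 0 - phi p) + lam * (1 - w0 p) * (phi 1 - phi p)

/-- Standing assumptions on the coefficients (Assumption 2.1 of the paper). -/
structure ModelAssumptions (lam : ℝ) (v mu w0 : ℝ → ℝ) : Prop where
  lam_nonneg : 0 ≤ lam
  analytic : ∃ U : Set ℝ, IsOpen U ∧ Icc (0 : ℝ) 1 ⊆ U ∧
    AnalyticOnNhd ℝ v U ∧ AnalyticOnNhd ℝ mu U ∧ AnalyticOnNhd ℝ w0 U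
  w0_mem : ∀ p ∈ Icc (0 : ℝ) 1, w0 p ∈ Icc (0 : ℝ) 1
  mu_zero_pos : 0 < mu 0
  mu_one_neg : mu 1 < 0
  v_zero : v 0 = 0
  v_one : v 1 = 0
  v_pos : ∀ p ∈ Ioo (0 : ℝ) 1, 0 < v p
  deriv_v_zero_pos : 0 < deriv v 0
  deriv_v_one_neg : deriv v 1 < 0

/-- `pi` is a smooth, integrable, normalized, positive solution of the stationary
boundary value problem (Eq. (14) of the paper). -/
structure StationaryDensity (lam : ℝ) (v mu w0 : ℝ → ℝ) (pi : ℝ → ℝ) : Prop where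
  contDiffOn : ContDiffOn ℝ 2 pi (Ioo (0 : ℝ) 1)
  pos : ∀ p ∈ Ioo (0 : ℝ) 1, 0 < pi p
  integrableOn : IntegrableOn pi (Ioo (0 : ℝ) 1)
  total_mass : (∫ p in Ioo (0 : ℝ) 1, pi p) = 1
  ode : ∀ p ∈ Ioo (0 : ℝ) 1,
    deriv (deriv fun q => 1 / 2 * v q * pi q) p - deriv (fun q => mu q * pi q) p
      - lam * pi p = 0
  bc_zero : Tendsto (fun p => mu p * pi p - deriv (fun q => 1 / 2 * v q * pi q) p)
    (𝓝[Ioo (0 : ℝ) 1] 0) (𝓝 (lam * ∫ p in Ioo (0 : ℝ) 1, w0 p * pi p))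
  bc_one : Tendsto (fun p => mu p * pi p - deriv (fun q => 1 / 2 * v q * pi q) p)
    (𝓝[Ioo (0 : ℝ) 1] 1) (𝓝 (-(lam * ∫ p in Ioo (0 : ℝ) 1, (1 - w0 p) * pi p)))
  vpi_zero : Tendsto (fun p => v p * pi p) (𝓝[Ioo (0 : ℝ) 1] 0) (𝓝 0)
  vpi_one : Tendsto (fun p => v p * pi p) (𝓝[Ioo (0 : ℝ) 1] 1) (𝓝 0)

/-- The drift of the diffusive motion of the time-reversed process:
`μ̃(p) = −μ(p) + (vπ)'(p)/π(p)`. -/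
noncomputable def bwdDrift (v mu pi : ℝ → ℝ) (p : ℝ) : ℝ :=
  -mu p + deriv (fun q => v q * pi q) p / pi p

/-- The scale density of the backward diffusive motion:
`S̃'(p) = exp(−∫_{1/2}^p 2μ̃(z)/v(z) dz)`. -/
noncomputable def bwdScaleDensity (v mu pi : ℝ → ℝ) (p : ℝ) : ℝ :=
  Real.exp (-∫ z in (1 / 2 : ℝ)..p, 2 * bwdDrift v mu pi z / v z)

/-- The scale function of the backward diffusive motion: `S̃(p) = ∫_{1/2}^p S̃'(x) dx`. -/
noncomputable def bwdScale (v mu pi : ℝ → ℝ) (p : ℝ) : ℝ :=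
  ∫ x in (1 / 2 : ℝ)..p, bwdScaleDensity v mu pi x

/-- The speed density of the backward diffusive motion: `m̃(p) = 1/(v(p)S̃'(p))`. -/
noncomputable def bwdSpeedDensity (v mu pi : ℝ → ℝ) (p : ℝ) : ℝ :=
  1 / (v p * bwdScaleDensity v mu pi p)

/-!
Since `2μ̃/v = -2μ/v + 2 (log vπ)'`, we get `m̃ / π = v π S' / (v π)(1/2)²`, where
`S' p = exp (-∫_{1/2}^p 2μ/v)` is the scale density of the forward diffusion, and
`(v π S')' = -2 S' F` with the probability flux `F = μ π - (v π / 2)'`, which tends to `λ κ₀`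
at `0` by the boundary condition. Since `v` has a simple zero at `0`, `2μ/v = α/p + O(1)` with
`α = 2μ(0)/v'(0)`, so `S'` is comparable to `p^(-α)` and `(v π S')'` is of exact order
`-p^(-α)` when `λ κ₀ > 0`: integrable if `α < 1`, giving a finite positive limit, and at most
`-c/p` if `α ≥ 1`, forcing divergence. The endpoint `1` is the mirror image under `p ↦ 1 - p`.
-/

theorem exists_abs_div_sub_div_le {f v : ℝ → ℝ} {a : ℝ} (hf : DifferentiableAt ℝ f a)
    (hv : AnalyticAt ℝ v a) (hva : v a = 0) (hv' : deriv v a ≠ 0) :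
    ∃ M, ∀ᶠ z in 𝓝[≠] a, |f z / v z - f a / deriv v a / (z - a)| ≤ M := by
  obtain ⟨P, hP⟩ := hv
  have hv₁ : AnalyticAt ℝ (dslope v a) a := ⟨_, hP.has_fpower_series_dslope_fslope⟩
  have hv₁a : dslope v a a ≠ 0 := by rwa [dslope_same]
  -- as `v = (· - a) * dslope v a`, the difference is the slope at `a` of `q = f / dslope v a`
  set q := fun z => f z / dslope v a z
  have hq : ContinuousAt (dslope q a) a :=
    continuousAt_dslope_same.2 (hf.div hv₁.differentiableAt hv₁a)
  refine ⟨|dslope q a a| + 1, ?_⟩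
  filter_upwards [self_mem_nhdsWithin,
    nhdsWithin_le_nhds (hv₁.continuousAt.eventually_ne hv₁a),
    nhdsWithin_le_nhds (hq.abs.eventually (gt_mem_nhds (lt_add_one _)))]
    with z (hz : z ≠ a) hz₁ hzM
  have hvz : v z = (z - a) * dslope v a z := by
    simpa [hva] using (sub_smul_dslope v a z).symm
  rw [dslope_of_ne _ hz, slope_def_field] at hzM
  refine le_of_eq_of_le ?_ hzM.le
  simp only [q, hvz, dslope_same]
  congr 1
  field_simp [sub_ne_zero.2 hz]

theorem exists_rpow_bounds_of_hasDerivAt {S g : ℝ → ℝ} {α M : ℝ}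
    (hg : ∀ᶠ p in 𝓝[>] 0, |g p - α / p| ≤ M)
    (hS : ∀ᶠ p in 𝓝[>] 0, 0 < S p ∧ HasDerivAt S (-(g p * S p)) p) :
    ∃ c₁ > 0, ∃ c₂ > 0, ∀ᶠ p in 𝓝[>] 0, c₁ * p ^ (-α) ≤ S p ∧ S p ≤ c₂ * p ^ (-α) := by
  obtain ⟨δ, hδ, hδS⟩ := (nhdsGT_basis (0 : ℝ)).eventually_iff.1 (hg.and hS)
  -- `T = log (p ^ α * S)` has derivative `α / p - g`, so it is `M`-Lipschitz on `(0, δ)`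
  set T : ℝ → ℝ := fun p => Real.log (S p) + α * Real.log p
  have hT : ∀ p ∈ Ioo 0 δ, HasDerivAt T (-(g p * S p) / S p + α * p⁻¹) p := fun p hp =>
    ((hδS hp).2.2.log (hδS hp).2.1.ne').add ((Real.hasDerivAt_log hp.1.ne').const_mul α)
  have hT' : ∀ p ∈ Ioo 0 δ, ‖-(g p * S p) / S p + α * p⁻¹‖ ≤ M := fun p hp => by
    have hSp := (hδS hp).2.1.ne'
    rw [show -(g p * S p) / S p + α * p⁻¹ = -(g p - α / p) by field_simp; ring, norm_neg]
    exact (hδS hp).1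
  have hmid : δ / 2 ∈ Ioo 0 δ := ⟨by positivity, by linarith⟩
  have hM : 0 ≤ M := (norm_nonneg _).trans (hT' _ hmid)
  have hTbound : ∀ p ∈ Ioo 0 δ, |T p - T (δ / 2)| ≤ M * δ := fun p hp => by
    have hlip := (convex_Ioo 0 δ).norm_image_sub_le_of_norm_hasDerivWithin_le
      (fun x hx => (hT x hx).hasDerivWithinAt) hT' hmid hp
    refine hlip.trans (mul_le_mul_of_nonneg_left ?_ hM)
    rw [Real.norm_eq_abs, abs_le]
    constructor <;> linarith [hp.1, hp.2]
  refine ⟨Real.exp (T (δ / 2) - M * δ), Real.exp_pos _, Real.exp (T (δ / 2) + M * δ),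
    Real.exp_pos _, ?_⟩
  filter_upwards [Ioo_mem_nhdsGT hδ] with p hp
  have hSp : S p = Real.exp (T p) * p ^ (-α) := by
    have hlog : T p + Real.log p * -α = Real.log (S p) := by ring
    rw [Real.rpow_def_of_pos hp.1, ← Real.exp_add, hlog, Real.exp_log (hδS hp).2.1]
  have hTp := abs_le.1 (hTbound p hp)
  have hpα := Real.rpow_pos_of_pos hp.1 (-α)
  rw [hSp]
  constructor <;> gcongr <;> linarith

theorem exists_pos_tendsto_nhdsGT_of_hasDerivAt_neg {h ψ : ℝ → ℝ} {C α : ℝ} (hα : α < 1)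
    (hh : ∀ᶠ p in 𝓝[>] 0,
      0 < h p ∧ HasDerivAt h (-ψ p) p ∧ 0 ≤ ψ p ∧ ψ p ≤ C * p ^ (-α)) :
    ∃ L > 0, Tendsto h (𝓝[>] 0) (𝓝 L) := by
  obtain ⟨δ, hδ, hδh⟩ := (nhdsGT_basis (0 : ℝ)).eventually_iff.1 hh
  have hmid : δ / 2 ∈ Ioo 0 δ := ⟨by positivity, by linarith⟩
  have hanti : AntitoneOn h (Ioo 0 δ) :=
    antitoneOn_of_hasDerivWithinAt_nonpos (convex_Ioo 0 δ)
      (fun p hp => (hδh hp).2.1.continuousAt.continuousWithinAt)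
      (fun p hp => (hδh (interior_subset hp)).2.1.hasDerivWithinAt)
      (fun p hp => neg_nonpos.2 (hδh (interior_subset hp)).2.2.1)
  have hC : 0 ≤ C := (mul_nonneg_iff_of_pos_right (Real.rpow_pos_of_pos hmid.1 (-α))).1
    ((hδh hmid).2.2.1.trans (hδh hmid).2.2.2)
  set φ : ℝ → ℝ := fun p => h p + C / (1 - α) * p ^ (1 - α)
  have hφ' : ∀ p ∈ Ioo 0 δ, HasDerivAt φ (-ψ p + C * p ^ (-α)) p := fun p hp => by
    refine ((hδh hp).2.1.add ((Real.hasDerivAt_rpow_const (Or.inl hp.1.ne')).const_mul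
      (C / (1 - α)))).congr_deriv ?_
    rw [sub_sub_cancel_left]
    field_simp [(sub_pos.2 hα).ne']
  have hφ : MonotoneOn φ (Ioo 0 δ) :=
    monotoneOn_of_hasDerivWithinAt_nonneg (convex_Ioo 0 δ)
      (fun p hp => (hφ' p hp).continuousAt.continuousWithinAt)
      (fun p hp => (hφ' p (interior_subset hp)).hasDerivWithinAt)
      (fun p hp => by linarith [(hδh (interior_subset hp)).2.2.2])
  have hle_φ : ∀ p ∈ Ioo 0 δ, h p ≤ φ p := fun p hp =>
    le_add_of_nonneg_right (mul_nonneg (div_nonneg hC (sub_pos.2 hα).le)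
      (Real.rpow_nonneg hp.1.le _))
  have hbdd : BddAbove (h '' Ioo 0 δ) := by
    refine ⟨φ (δ / 2), forall_mem_image.2 fun p hp => ?_⟩
    rcases le_total p (δ / 2) with hpδ | hpδ
    · exact (hle_φ p hp).trans (hφ hp hmid hpδ)
    · exact (hanti hmid hp hpδ).trans (hle_φ _ hmid)
  refine ⟨_, ?_, hanti.tendsto_nhdsWithin_Ioo_right ⟨_, hmid⟩ hbdd⟩
  exact (hδh hmid).1.trans_le (le_csSup hbdd (mem_image_of_mem h hmid))

theorem tendsto_atTop_nhdsGT_of_hasDerivAt_neg {h ψ : ℝ → ℝ} {c : ℝ} (hc : 0 < c)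
    (hh : ∀ᶠ p in 𝓝[>] 0, HasDerivAt h (-ψ p) p ∧ c / p ≤ ψ p) :
    Tendsto h (𝓝[>] 0) atTop := by
  obtain ⟨δ, hδ, hδh⟩ := (nhdsGT_basis (0 : ℝ)).eventually_iff.1 hh
  have hmid : δ / 2 ∈ Ioo 0 δ := ⟨by positivity, by linarith⟩
  set φ : ℝ → ℝ := fun p => h p + c * Real.log p
  have hφ' : ∀ p ∈ Ioo 0 δ, HasDerivAt φ (-ψ p + c * p⁻¹) p := fun p hp =>
    (hδh hp).1.add ((Real.hasDerivAt_log hp.1.ne').const_mul c)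
  have hφ : AntitoneOn φ (Ioo 0 δ) :=
    antitoneOn_of_hasDerivWithinAt_nonpos (convex_Ioo 0 δ)
      (fun p hp => (hφ' p hp).continuousAt.continuousWithinAt)
      (fun p hp => (hφ' p (interior_subset hp)).hasDerivWithinAt)
      (fun p hp => by
        have hψ := (hδh (interior_subset hp)).2
        rw [← div_eq_mul_inv]
        linarith)
  have hlog : Tendsto (fun p => φ (δ / 2) + c * -Real.log p) (𝓝[>] 0) atTop :=
    tendsto_atTop_add_const_left _ _
      ((tendsto_neg_atBot_atTop.comp Real.tendsto_log_nhdsGT_zero).const_mul_atTop hc)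
  refine tendsto_atTop_mono' _ ?_ hlog
  filter_upwards [Ioo_mem_nhdsGT hmid.1] with p hp
  have hφp := hφ ⟨hp.1, hp.2.trans hmid.2⟩ hmid hp.2.le
  simp only [φ] at hφp ⊢
  linarith

theorem tendsto_nhdsGT_of_hasDerivAt_scale {h S g F : ℝ → ℝ} {α M K : ℝ} (hK : 0 < K)
    (hF : Tendsto F (𝓝[>] 0) (𝓝 K)) (hg : ∀ᶠ p in 𝓝[>] 0, |g p - α / p| ≤ M)
    (hS : ∀ᶠ p in 𝓝[>] 0, 0 < S p ∧ HasDerivAt S (-(g p * S p)) p)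
    (hh : ∀ᶠ p in 𝓝[>] 0, 0 < h p ∧ HasDerivAt h (-(S p * F p)) p) :
    (α < 1 → ∃ L > 0, Tendsto h (𝓝[>] 0) (𝓝 L)) ∧ (1 ≤ α → Tendsto h (𝓝[>] 0) atTop) := by
  obtain ⟨c₁, hc₁, c₂, hc₂, hSb⟩ := exists_rpow_bounds_of_hasDerivAt hg hS
  have hFK : ∀ᶠ p in 𝓝[>] 0, K / 2 < F p ∧ F p < 2 * K :=
    hF.eventually (Ioo_mem_nhds (by linarith) (by linarith))
  refine ⟨fun hα => ?_, fun hα => ?_⟩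
  · refine exists_pos_tendsto_nhdsGT_of_hasDerivAt_neg (ψ := fun p => S p * F p)
      (C := c₂ * (2 * K)) hα ?_
    filter_upwards [hh, hSb, hFK, self_mem_nhdsWithin] with p hhp hSp hFp (hp : 0 < p)
    have hpα := Real.rpow_pos_of_pos hp (-α)
    have hSpos : 0 < S p := (mul_pos hc₁ hpα).trans_le hSp.1
    have hFpos : 0 < F p := by linarith
    refine ⟨hhp.1, hhp.2, (mul_pos hSpos hFpos).le, ?_⟩
    calc S p * F p ≤ c₂ * p ^ (-α) * (2 * K) :=
          mul_le_mul hSp.2 hFp.2.le hFpos.le (by positivity)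
      _ = c₂ * (2 * K) * p ^ (-α) := by ring
  · refine tendsto_atTop_nhdsGT_of_hasDerivAt_neg (ψ := fun p => S p * F p)
      (c := c₁ * (K / 2)) (by positivity) ?_
    filter_upwards [hh, hSb, hFK, Ioo_mem_nhdsGT one_pos] with p hhp hSp hFp hp
    refine ⟨hhp.2, ?_⟩
    have hpα : p ^ (-1 : ℝ) ≤ p ^ (-α) :=
      Real.rpow_le_rpow_of_exponent_ge hp.1 hp.2.le (neg_le_neg hα)
    rw [Real.rpow_neg_one] at hpα
    have hSpos : 0 < S p := (mul_pos hc₁ (Real.rpow_pos_of_pos hp.1 (-α))).trans_le hSp.1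
    calc c₁ * (K / 2) / p = c₁ * p⁻¹ * (K / 2) := by ring
      _ ≤ c₁ * p ^ (-α) * (K / 2) := by gcongr
      _ ≤ S p * F p := mul_le_mul hSp.1 hFp.1.le (by positivity) hSpos.le

theorem tendsto_sub_left_nhdsGT_zero (b : ℝ) : Tendsto (b - ·) (𝓝[>] 0) (𝓝[<] b) :=
  tendsto_nhdsWithin_of_tendsto_nhds_of_eventually_within _
    (by simpa using ((continuous_sub_left b).tendsto 0).mono_left nhdsWithin_le_nhds)
    (eventually_mem_nhdsWithin.mono fun _ hp => sub_lt_self b hp)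

theorem tendsto_sub_left_nhdsLT (b : ℝ) : Tendsto (b - ·) (𝓝[<] b) (𝓝[>] 0) :=
  tendsto_nhdsWithin_of_tendsto_nhds_of_eventually_within _
    (by simpa using ((continuous_sub_left b).tendsto b).mono_left nhdsWithin_le_nhds)
    (eventually_mem_nhdsWithin.mono fun _ hp => mem_Ioi.2 (sub_pos.2 hp))

theorem tendsto_nhdsLT_of_hasDerivAt_scale {h S g F : ℝ → ℝ} {b α M K : ℝ} (hK : 0 < K)
    (hF : Tendsto F (𝓝[<] b) (𝓝 (-K))) (hg : ∀ᶠ p in 𝓝[<] b, |g p - α / (p - b)| ≤ M)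
    (hS : ∀ᶠ p in 𝓝[<] b, 0 < S p ∧ HasDerivAt S (-(g p * S p)) p)
    (hh : ∀ᶠ p in 𝓝[<] b, 0 < h p ∧ HasDerivAt h (-(S p * F p)) p) :
    (α < 1 → ∃ L > 0, Tendsto h (𝓝[<] b) (𝓝 L)) ∧ (1 ≤ α → Tendsto h (𝓝[<] b) atTop) := by
  have hb := tendsto_sub_left_nhdsGT_zero b
  have key := tendsto_nhdsGT_of_hasDerivAt_scale (h := fun q => h (b - q))
    (S := fun q => S (b - q)) (g := fun q => -g (b - q)) (F := fun q => -F (b - q)) (M := M) hK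
    (by simpa using (hF.comp hb).neg)
    ((hb.eventually hg).mono fun q hq => by
      rwa [sub_sub_cancel_left, div_neg, ← abs_neg, neg_sub', neg_neg] at hq)
    ((hb.eventually hS).mono fun q hq =>
      ⟨hq.1, (hq.2.comp_const_sub b q).congr_deriv (by ring)⟩)
    ((hb.eventually hh).mono fun q hq =>
      ⟨hq.1, (hq.2.comp_const_sub b q).congr_deriv (by ring)⟩)
  have hb' := tendsto_sub_left_nhdsLT b
  refine ⟨fun hα => ?_, fun hα => ?_⟩
  · obtain ⟨L, hL, hlim⟩ := key.1 hα
    exact ⟨L, hL, by simpa [Function.comp_def] using hlim.comp hb'⟩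
  · simpa [Function.comp_def] using (key.2 hα).comp hb'

theorem setIntegral_Ioo_mul_pos {w f : ℝ → ℝ} {a b : ℝ} (hab : a < b)
    (hw : ContinuousOn w (Icc a b)) (hw0 : ∀ p ∈ Icc a b, 0 ≤ w p) (hne : ∃ p ∈ Icc a b, w p ≠ 0)
    (hf : IntegrableOn f (Ioo a b)) (hfpos : ∀ p ∈ Ioo a b, 0 < f p) :
    0 < ∫ p in Ioo a b, w p * f p := by
  obtain ⟨p₀, hp₀, hwp₀⟩ := hne
  have hw' := hw.mono Ioo_subset_Icc_self
  have hU : IsOpen (Ioo a b ∩ w ⁻¹' Ioi 0) := hw'.isOpen_inter_preimage isOpen_Ioo isOpen_Ioi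
  have hUne : (Ioo a b ∩ w ⁻¹' Ioi 0).Nonempty := by
    have : (𝓝[Ioo a b] p₀).NeBot :=
      mem_closure_iff_nhdsWithin_neBot.1 (by rwa [closure_Ioo hab.ne])
    have hpos := (hw p₀ hp₀).mono Ioo_subset_Icc_self |>.eventually
      (lt_mem_nhds ((hw0 p₀ hp₀).lt_of_ne' hwp₀))
    obtain ⟨p, hp, hpI⟩ := (hpos.and self_mem_nhdsWithin).exists
    exact ⟨p, hpI, hp⟩
  rw [setIntegral_pos_iff_support_of_nonneg_ae
    (ae_restrict_of_forall_mem measurableSet_Ioo fun p hp =>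
      mul_nonneg (hw0 p (Ioo_subset_Icc_self hp)) (hfpos p hp).le)
    (hf.continuousOn_mul_of_subset hw isCompact_Icc measurableSet_Ioo Ioo_subset_Icc_self)]
  exact (hU.measure_pos volume hUne).trans_le
    (measure_mono fun p hp => ⟨(mul_pos hp.2 (hfpos p hp.1)).ne', hp.1⟩)

noncomputable def fwdScaleDensity (v mu : ℝ → ℝ) (p : ℝ) : ℝ :=
  Real.exp (-∫ z in (1 / 2 : ℝ)..p, 2 * mu z / v z)

namespace ModelAssumptions

variable {lam : ℝ} {v mu w0 : ℝ → ℝ}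

theorem analyticAt_v (H : ModelAssumptions lam v mu w0) {p : ℝ} (hp : p ∈ Icc 0 1) :
    AnalyticAt ℝ v p := by
  obtain ⟨U, -, hU, hv, -, -⟩ := H.analytic
  exact hv p (hU hp)

theorem analyticAt_mu (H : ModelAssumptions lam v mu w0) {p : ℝ} (hp : p ∈ Icc 0 1) :
    AnalyticAt ℝ mu p := by
  obtain ⟨U, -, hU, -, hmu, -⟩ := H.analytic
  exact hmu p (hU hp)

theorem continuousOn_w0 (H : ModelAssumptions lam v mu w0) : ContinuousOn w0 (Icc 0 1) := by
  obtain ⟨U, -, hU, -, -, hw0⟩ := H.analytic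
  exact fun p hp => (hw0 p (hU hp)).continuousAt.continuousWithinAt

theorem continuousOn_drift_div (H : ModelAssumptions lam v mu w0) :
    ContinuousOn (fun z => 2 * mu z / v z) (Ioo 0 1) := fun p hp =>
  ((((H.analyticAt_mu (Ioo_subset_Icc_self hp)).continuousAt.const_mul 2).div
    (H.analyticAt_v (Ioo_subset_Icc_self hp)).continuousAt (H.v_pos p hp).ne')).continuousWithinAt

theorem hasDerivAt_integral_drift_div (H : ModelAssumptions lam v mu w0) {p : ℝ}
    (hp : p ∈ Ioo 0 1) :
    HasDerivAt (fun p => ∫ z in (1 / 2 : ℝ)..p, 2 * mu z / v z) (2 * mu p / v p) p :=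
  intervalIntegral.integral_hasDerivAt_right
    (H.continuousOn_drift_div.mono
      (ordConnected_Ioo.uIcc_subset (by norm_num) hp)).intervalIntegrable
    (H.continuousOn_drift_div.stronglyMeasurableAtFilter isOpen_Ioo p hp)
    (H.continuousOn_drift_div.continuousAt (isOpen_Ioo.mem_nhds hp))

theorem hasDerivAt_fwdScaleDensity (H : ModelAssumptions lam v mu w0) {p : ℝ}
    (hp : p ∈ Ioo 0 1) :
    HasDerivAt (fwdScaleDensity v mu) (-(2 * mu p / v p * fwdScaleDensity v mu p)) p :=
  ((H.hasDerivAt_integral_drift_div hp).neg.exp).congr_deriv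
    (by simp only [fwdScaleDensity, Pi.neg_apply]; ring)

end ModelAssumptions

namespace StationaryDensity

variable {lam : ℝ} {v mu w0 pi : ℝ → ℝ}

theorem contDiffOn_mul (H : ModelAssumptions lam v mu w0)
    (HP : StationaryDensity lam v mu w0 pi) : ContDiffOn ℝ 2 (fun q => v q * pi q) (Ioo 0 1) :=
  ContDiffOn.mul
    (fun _ hp => (H.analyticAt_v (Ioo_subset_Icc_self hp)).contDiffAt.contDiffWithinAt)
    HP.contDiffOn

theorem hasDerivAt_mul (H : ModelAssumptions lam v mu w0) (HP : StationaryDensity lam v mu w0 pi)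
    {p : ℝ} (hp : p ∈ Ioo 0 1) :
    HasDerivAt (fun q => v q * pi q) (deriv (fun q => v q * pi q) p) p :=
  ((HP.contDiffOn_mul H).differentiableOn (by norm_num) p hp |>.differentiableAt
    (isOpen_Ioo.mem_nhds hp)).hasDerivAt

theorem integral_bwdDrift_div (H : ModelAssumptions lam v mu w0)
    (HP : StationaryDensity lam v mu w0 pi) {p : ℝ} (hp : p ∈ Ioo 0 1) :
    ∫ z in (1 / 2 : ℝ)..p, 2 * bwdDrift v mu pi z / v z =
      -(∫ z in (1 / 2 : ℝ)..p, 2 * mu z / v z)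
        + 2 * (Real.log (v p * pi p) - Real.log (v (1 / 2) * pi (1 / 2))) := by
  set P := fun q => v q * pi q
  have hsub : uIcc (1 / 2) p ⊆ Ioo 0 1 := ordConnected_Ioo.uIcc_subset (by norm_num) hp
  have hPpos : ∀ z ∈ Ioo (0 : ℝ) 1, 0 < P z := fun z hz => mul_pos (H.v_pos z hz) (HP.pos z hz)
  have hdrift : ∀ z ∈ Ioo (0 : ℝ) 1,
      2 * bwdDrift v mu pi z / v z = -(2 * mu z / v z) + 2 * (deriv P z / P z) := fun z hz => by
    simp only [bwdDrift, P]
    field_simp [(H.v_pos z hz).ne', (HP.pos z hz).ne']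
  have hderiv : ∀ z ∈ uIcc (1 / 2) p, HasDerivAt
      (fun z => -(∫ z in (1 / 2 : ℝ)..z, 2 * mu z / v z) + 2 * Real.log (P z))
      (2 * bwdDrift v mu pi z / v z) z := fun z hz => by
    rw [hdrift z (hsub hz)]
    exact (H.hasDerivAt_integral_drift_div (hsub hz)).neg.add
      (((HP.hasDerivAt_mul H (hsub hz)).log (hPpos z (hsub hz)).ne').const_mul 2)
  have hcont : ContinuousOn (fun z => 2 * bwdDrift v mu pi z / v z) (uIcc (1 / 2) p) := by
    refine ContinuousOn.congr ?_ fun z hz => hdrift z (hsub hz)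
    exact ((H.continuousOn_drift_div.mono hsub).neg).add (continuousOn_const.mul
      ((((HP.contDiffOn_mul H).continuousOn_deriv_of_isOpen isOpen_Ioo (by norm_num)).mono
        hsub).div ((HP.contDiffOn_mul H).continuousOn.mono hsub)
          fun z hz => (hPpos z (hsub hz)).ne'))
  rw [intervalIntegral.integral_eq_sub_of_hasDerivAt hderiv hcont.intervalIntegrable]
  simp only [intervalIntegral.integral_same, P]
  ring

theorem bwdSpeedDensity_div_eq (H : ModelAssumptions lam v mu w0)
    (HP : StationaryDensity lam v mu w0 pi) {p : ℝ} (hp : p ∈ Ioo 0 1) :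
    bwdSpeedDensity v mu pi p / pi p =
      v p * pi p * fwdScaleDensity v mu p / (v (1 / 2) * pi (1 / 2)) ^ 2 := by
  have hhalf : (1 / 2 : ℝ) ∈ Ioo 0 1 := by norm_num
  have hP := mul_pos (H.v_pos p hp) (HP.pos p hp)
  have hP₀ := mul_pos (H.v_pos _ hhalf) (HP.pos _ hhalf)
  rw [bwdSpeedDensity, bwdScaleDensity, HP.integral_bwdDrift_div H hp, fwdScaleDensity,
    neg_add, neg_neg, Real.exp_add, mul_sub, Real.exp_neg, Real.exp_sub,
    ← Real.log_rpow hP, ← Real.log_rpow hP₀, Real.exp_log (by positivity),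
    Real.exp_log (by positivity), Real.rpow_two, Real.rpow_two]
  simp only [Real.exp_neg]
  field_simp [(H.v_pos p hp).ne', (HP.pos p hp).ne', (H.v_pos _ hhalf).ne', (HP.pos _ hhalf).ne']

theorem hasDerivAt_mul_fwdScaleDensity (H : ModelAssumptions lam v mu w0)
    (HP : StationaryDensity lam v mu w0 pi) {p : ℝ} (hp : p ∈ Ioo 0 1) :
    HasDerivAt (fun q => v q * pi q * fwdScaleDensity v mu q)
      (-(fwdScaleDensity v mu p *
        (2 * (mu p * pi p - deriv (fun q => 1 / 2 * v q * pi q) p)))) p := by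
  have hderiv_half :
      deriv (fun q => 1 / 2 * v q * pi q) p = 1 / 2 * deriv (fun q => v q * pi q) p := by
    simp only [mul_assoc, deriv_const_mul_field']
  refine ((HP.hasDerivAt_mul H hp).mul (H.hasDerivAt_fwdScaleDensity hp)).congr_deriv ?_
  rw [hderiv_half]
  field_simp [(H.v_pos p hp).ne']
  ring

theorem lam_mul_integral_pos (H : ModelAssumptions lam v mu w0)
    (HP : StationaryDensity lam v mu w0 pi) {i : ℝ} {wi : ℝ → ℝ}
    (hwi : (i = 0 ∧ wi = w0) ∨ (i = 1 ∧ wi = fun p => 1 - w0 p))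
    (hw : ∃ p ∈ Icc (0 : ℝ) 1, lam * wi p ≠ 0) :
    0 < lam * ∫ q in Ioo (0 : ℝ) 1, wi q * pi q := by
  obtain ⟨p, hp, hne⟩ := hw
  obtain ⟨hwc, hw0⟩ : ContinuousOn wi (Icc 0 1) ∧ ∀ q ∈ Icc (0 : ℝ) 1, 0 ≤ wi q := by
    rcases hwi with ⟨-, rfl⟩ | ⟨-, rfl⟩
    · exact ⟨H.continuousOn_w0, fun q hq => (H.w0_mem q hq).1⟩
    · exact ⟨continuousOn_const.sub H.continuousOn_w0,
        fun q hq => sub_nonneg.2 (H.w0_mem q hq).2⟩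
  exact mul_pos (H.lam_nonneg.lt_of_ne' (left_ne_zero_of_mul hne))
    (setIntegral_Ioo_mul_pos zero_lt_one hwc hw0 ⟨p, hp, right_ne_zero_of_mul hne⟩
      HP.integrableOn HP.pos)

theorem tendsto_mul_fwdScaleDensity (H : ModelAssumptions lam v mu w0)
    (HP : StationaryDensity lam v mu w0 pi) {i : ℝ} {wi : ℝ → ℝ}
    (hwi : (i = 0 ∧ wi = w0) ∨ (i = 1 ∧ wi = fun p => 1 - w0 p))
    (hκ : 0 < lam * ∫ q in Ioo (0 : ℝ) 1, wi q * pi q) :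
    (2 * |mu i| < |deriv v i| → ∃ L > 0,
      Tendsto (fun p => v p * pi p * fwdScaleDensity v mu p) (𝓝[Ioo 0 1] i) (𝓝 L)) ∧
    (|deriv v i| ≤ 2 * |mu i| →
      Tendsto (fun p => v p * pi p * fwdScaleDensity v mu p) (𝓝[Ioo 0 1] i) atTop) := by
  have hS : ∀ p ∈ Ioo (0 : ℝ) 1, 0 < fwdScaleDensity v mu p ∧
      HasDerivAt (fwdScaleDensity v mu) (-(2 * mu p / v p * fwdScaleDensity v mu p)) p :=
    fun p hp => ⟨Real.exp_pos _, H.hasDerivAt_fwdScaleDensity hp⟩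
  have hh : ∀ p ∈ Ioo (0 : ℝ) 1, 0 < v p * pi p * fwdScaleDensity v mu p ∧
      HasDerivAt (fun q => v q * pi q * fwdScaleDensity v mu q) (-(fwdScaleDensity v mu p *
        (2 * (mu p * pi p - deriv (fun q => 1 / 2 * v q * pi q) p)))) p :=
    fun p hp => ⟨mul_pos (mul_pos (H.v_pos p hp) (HP.pos p hp)) (Real.exp_pos _),
      HP.hasDerivAt_mul_fwdScaleDensity H hp⟩
  rcases hwi with ⟨rfl, rfl⟩ | ⟨rfl, rfl⟩
  · obtain ⟨M, hM⟩ := exists_abs_div_sub_div_le (f := fun z => 2 * mu z)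
      ((H.analyticAt_mu (by norm_num)).differentiableAt.const_mul 2)
      (H.analyticAt_v (by norm_num)) H.v_zero H.deriv_v_zero_pos.ne'
    have hF := HP.bc_zero.const_mul 2
    rw [nhdsWithin_Ioo_eq_nhdsGT one_pos] at hF
    have key := tendsto_nhdsGT_of_hasDerivAt_scale (mul_pos two_pos hκ) hF
      (hM.filter_mono (nhdsWithin_mono _ fun z (hz : 0 < z) => hz.ne') |>.mono fun z hz => by
        rwa [sub_zero] at hz)
      (eventually_of_mem (Ioo_mem_nhdsGT one_pos) hS)
      (eventually_of_mem (Ioo_mem_nhdsGT one_pos) hh)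
    rw [nhdsWithin_Ioo_eq_nhdsGT one_pos, abs_of_pos H.mu_zero_pos,
      abs_of_pos H.deriv_v_zero_pos]
    exact ⟨fun hlt => key.1 ((div_lt_one H.deriv_v_zero_pos).2 hlt),
      fun hge => key.2 ((one_le_div H.deriv_v_zero_pos).2 hge)⟩
  · obtain ⟨M, hM⟩ := exists_abs_div_sub_div_le (f := fun z => 2 * mu z)
      ((H.analyticAt_mu (by norm_num)).differentiableAt.const_mul 2)
      (H.analyticAt_v (by norm_num)) H.v_one H.deriv_v_one_neg.ne
    have hF := HP.bc_one.const_mul 2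
    rw [nhdsWithin_Ioo_eq_nhdsLT one_pos, mul_neg] at hF
    have key := tendsto_nhdsLT_of_hasDerivAt_scale (mul_pos two_pos hκ) hF
      (hM.filter_mono (nhdsWithin_mono _ fun z (hz : z < 1) => hz.ne))
      (eventually_of_mem (Ioo_mem_nhdsLT one_pos) hS)
      (eventually_of_mem (Ioo_mem_nhdsLT one_pos) hh)
    rw [nhdsWithin_Ioo_eq_nhdsLT one_pos, abs_of_neg H.mu_one_neg,
      abs_of_neg H.deriv_v_one_neg]
    exact ⟨fun hlt => key.1 ((div_lt_one_of_neg H.deriv_v_one_neg).2 (by linarith)),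
      fun hge => key.2 ((one_le_div_of_neg H.deriv_v_one_neg).2 (by linarith))⟩

end StationaryDensity

/-- the jump rate constant `rᵢ = lim_{p→i} (m̃(p)/π(p))·λκᵢ` exists in
`[0,∞]`: it is a finite positive real if `2|μ(i)| < |v'(i)|` and `λwᵢ ≢ 0`; it is `∞`
(the limit is `atTop`) if `2|μ(i)| ≥ |v'(i)|` and `λwᵢ ≢ 0`; and it is `0` if `λwᵢ ≡ 0`. -/
theorem stmt_14 (lam : ℝ) (v mu w0 pi : ℝ → ℝ)
    (H : ModelAssumptions lam v mu w0)
    (HP : StationaryDensity lam v mu w0 pi)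
    (i : ℝ) (wi : ℝ → ℝ)
    (hwi : (i = 0 ∧ wi = w0) ∨ (i = 1 ∧ wi = fun p => 1 - w0 p)) :
    (2 * |mu i| < |deriv v i| → (∃ p ∈ Icc (0 : ℝ) 1, lam * wi p ≠ 0) →
      ∃ r : ℝ, 0 < r ∧
        Tendsto (fun p => bwdSpeedDensity v mu pi p / pi p
            * (lam * ∫ q in Ioo (0 : ℝ) 1, wi q * pi q))
          (𝓝[Ioo (0 : ℝ) 1] i) (𝓝 r)) ∧
    (2 * |mu i| ≥ |deriv v i| → (∃ p ∈ Icc (0 : ℝ) 1, lam * wi p ≠ 0) →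
      Tendsto (fun p => bwdSpeedDensity v mu pi p / pi p
          * (lam * ∫ q in Ioo (0 : ℝ) 1, wi q * pi q))
        (𝓝[Ioo (0 : ℝ) 1] i) atTop) ∧
    ((∀ p ∈ Icc (0 : ℝ) 1, lam * wi p = 0) →
      Tendsto (fun p => bwdSpeedDensity v mu pi p / pi p
          * (lam * ∫ q in Ioo (0 : ℝ) 1, wi q * pi q))
        (𝓝[Ioo (0 : ℝ) 1] i) (𝓝 0)) := by
  set κ := lam * ∫ q in Ioo (0 : ℝ) 1, wi q * pi q with hκ_def
  have hhalf : (1 / 2 : ℝ) ∈ Ioo 0 1 := by norm_num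
  have hP₀ : 0 < (v (1 / 2) * pi (1 / 2)) ^ 2 :=
    pow_pos (mul_pos (H.v_pos _ hhalf) (HP.pos _ hhalf)) 2
  have hR : (fun p => v p * pi p * fwdScaleDensity v mu p * (κ / (v (1 / 2) * pi (1 / 2)) ^ 2))
      =ᶠ[𝓝[Ioo 0 1] i] fun p => bwdSpeedDensity v mu pi p / pi p * κ :=
    eventually_mem_nhdsWithin.mono fun p hp => by
      dsimp only
      rw [HP.bwdSpeedDensity_div_eq H hp]
      ring
  refine ⟨fun hlt hw => ?_, fun hge hw => ?_, fun hw => ?_⟩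
  · have hκ := HP.lam_mul_integral_pos H hwi hw
    obtain ⟨L, hL, hlim⟩ := (HP.tendsto_mul_fwdScaleDensity H hwi hκ).1 hlt
    exact ⟨_, mul_pos hL (div_pos hκ hP₀), (hlim.mul_const _).congr' hR⟩
  · have hκ := HP.lam_mul_integral_pos H hwi hw
    exact (((HP.tendsto_mul_fwdScaleDensity H hwi hκ).2 hge).atTop_mul_const
      (div_pos hκ hP₀)).congr' hR
  · have hκ : κ = 0 := by
      rw [hκ_def, ← integral_const_mul]
      exact setIntegral_eq_zero_of_forall_eq_zero fun p hp => by
        rw [← mul_assoc, hw p (Ioo_subset_Icc_self hp), zero_mul]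
    simpa [hκ] using tendsto_const_nhds
end

section
/- Let φ : [0,1] → ℝ be twice continuously differentiable, and let ψ : [0,1] → ℝ be continuous, twice continuously differentiable on (0,1), such that the function p ↦ (1/2) v(p) ψ''(p) + μ̃(p) ψ'(p) is bounded on (0,1), and such that for each i ∈ {0,1} the limit lim_{p→i} ((1/2) v π ψ')(p) exists and equals (−1)^{i+1} ∫₀¹ (ψ(p) − ψ(i)) λ wᵢ(p) π(p) dp. Then ∫₀¹ Gφ(p) ψ(p) π(p) dp = ∫₀¹ φ(p) ((1/2) v(p) ψ''(p) + μ̃(p) ψ'(p)) π(p) dp. -/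
/-!
Write `a = (1/2)vπ` and `J = μπ - a'` for the probability flux. The stationary equation says
`J' = -λπ`, and `π · Ãψ = (aψ')' - Jψ'`. Hence the concomitant `F = aψφ' - φaψ' + φψJ` satisfies
`F' = (Gφ)ψπ - φ(Ãψ)π - λ(w₀φ(0) + w₁φ(1))ψπ`, and the jump terms integrate to exactly
`F(0+) - F(1-)`: the boundary conditions on `π` and `ψ` give `F(0+) = λφ(0)∫ψw₀π` and
`F(1-) = -λφ(1)∫ψw₁π`.
-/

open MeasureTheory Set Filter Topology Asymptotics

noncomputable def bwdGen (v mu pi psi : ℝ → ℝ) (p : ℝ) : ℝ :=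
  1 / 2 * v p * deriv (deriv psi) p + bwdDrift v mu pi p * deriv psi p

noncomputable def concomitant (v mu pi phi psi : ℝ → ℝ) (p : ℝ) : ℝ :=
  1 / 2 * v p * pi p * (psi p * deriv phi p) - phi p * (1 / 2 * v p * pi p * deriv psi p)
    + phi p * psi p * (mu p * pi p - deriv (fun q => 1 / 2 * v q * pi q) p)

theorem integral_Ioo_eq_sub_of_hasDerivAt_of_tendsto {f f' : ℝ → ℝ} {a b fa fb : ℝ}
    (hab : a < b) (hderiv : ∀ x ∈ Ioo a b, HasDerivAt f (f' x) x)
    (hint : IntegrableOn f' (Ioo a b))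
    (ha : Tendsto f (𝓝[>] a) (𝓝 fa)) (hb : Tendsto f (𝓝[<] b) (𝓝 fb)) :
    ∫ x in Ioo a b, f' x = fb - fa := by
  rw [← integral_Ioc_eq_integral_Ioo, ← intervalIntegral.integral_of_le hab.le]
  exact intervalIntegral.integral_eq_sub_of_hasDerivAt_of_tendsto hab hderiv
    ((intervalIntegrable_iff_integrableOn_Ioo_of_le hab.le).mpr hint) ha hb

theorem ContDiffOn.hasDerivAt_of_isOpen {f : ℝ → ℝ} {s : Set ℝ} {n : WithTop ℕ∞} {x : ℝ}
    (hf : ContDiffOn ℝ n f s) (hs : IsOpen s) (hn : n ≠ 0) (hx : x ∈ s) :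
    HasDerivAt f (deriv f x) x :=
  ((hf.contDiffAt (hs.mem_nhds hx)).differentiableAt hn).hasDerivAt

theorem ContDiffOn.hasDerivAt_deriv_of_isOpen {f : ℝ → ℝ} {s : Set ℝ} {x : ℝ}
    (hf : ContDiffOn ℝ 2 f s) (hs : IsOpen s) (hx : x ∈ s) :
    HasDerivAt (deriv f) (deriv (deriv f) x) x :=
  (hf.deriv_of_isOpen hs (m := 1) (by norm_num)).hasDerivAt_of_isOpen hs one_ne_zero hx

theorem tendsto_concomitant {v mu pi phi psi : ℝ → ℝ} {l : Filter ℝ} {phi₀ dphi₀ psi₀ b c : ℝ}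
    (hvpi : Tendsto (fun p => v p * pi p) l (𝓝 0))
    (hflux : Tendsto (fun p => mu p * pi p - deriv (fun q => 1 / 2 * v q * pi q) p) l (𝓝 c))
    (hb : Tendsto (fun p => 1 / 2 * v p * pi p * deriv psi p) l (𝓝 b))
    (hphi : Tendsto phi l (𝓝 phi₀)) (hdphi : Tendsto (deriv phi) l (𝓝 dphi₀))
    (hpsi : Tendsto psi l (𝓝 psi₀)) :
    Tendsto (concomitant v mu pi phi psi) l (𝓝 (phi₀ * (psi₀ * c - b))) := by
  have hvpi' : Tendsto (fun p => 1 / 2 * v p * pi p) l (𝓝 0) := by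
    simpa [mul_assoc] using hvpi.const_mul (1 / 2 : ℝ)
  convert ((hvpi'.mul (hpsi.mul hdphi)).sub (hphi.mul hb)).add ((hphi.mul hpsi).mul hflux)
    using 2
  · rfl
  · ring

section Model

variable {lam : ℝ} {v mu w0 pi : ℝ → ℝ}

theorem ModelAssumptions.contDiffOn (H : ModelAssumptions lam v mu w0) {n : WithTop ℕ∞} :
    ContDiffOn ℝ n v (Icc 0 1) ∧ ContDiffOn ℝ n mu (Icc 0 1) ∧ ContDiffOn ℝ n w0 (Icc 0 1) := by
  obtain ⟨U, -, hIccU, hv, hmu, hw0⟩ := H.analytic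
  exact ⟨(hv.contDiffOn_of_completeSpace).mono hIccU,
    (hmu.contDiffOn_of_completeSpace).mono hIccU, (hw0.contDiffOn_of_completeSpace).mono hIccU⟩

theorem StationaryDensity.integrableOn_mul (HP : StationaryDensity lam v mu w0 pi) {c : ℝ → ℝ}
    (hc : ContinuousOn c (Icc 0 1)) : IntegrableOn (fun p => c p * pi p) (Ioo 0 1) :=
  IntegrableOn.continuousOn_mul_of_subset hc HP.integrableOn isCompact_Icc measurableSet_Ioo
    Ioo_subset_Icc_self

theorem StationaryDensity.hasDerivAt_concomitant (HP : StationaryDensity lam v mu w0 pi)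
    (hv : ContDiffOn ℝ 2 v (Ioo 0 1)) (hmu : ContDiffOn ℝ 1 mu (Ioo 0 1))
    {phi psi : ℝ → ℝ} (hphi : ContDiff ℝ 2 phi) (hpsi : ContDiffOn ℝ 2 psi (Ioo 0 1))
    {p : ℝ} (hp : p ∈ Ioo 0 1) :
    HasDerivAt (concomitant v mu pi phi psi)
      (fwdGen lam v mu w0 phi p * psi p * pi p - phi p * bwdGen v mu pi psi p * pi p
        - (phi 0 * (psi p * (lam * w0 p * pi p))
          + phi 1 * (psi p * (lam * (1 - w0 p) * pi p)))) p := by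
  have ha : ContDiffOn ℝ 2 (fun q => 1 / 2 * v q * pi q) (Ioo 0 1) :=
    (contDiffOn_const.mul hv).mul HP.contDiffOn
  have hmupi : ContDiffOn ℝ 1 (fun q => mu q * pi q) (Ioo 0 1) :=
    hmu.mul (HP.contDiffOn.of_le one_le_two)
  have da := ha.hasDerivAt_of_isOpen isOpen_Ioo two_ne_zero hp
  have dda := ha.hasDerivAt_deriv_of_isOpen isOpen_Ioo hp
  have dmupi := hmupi.hasDerivAt_of_isOpen isOpen_Ioo one_ne_zero hp
  have dphi := hphi.contDiffOn.hasDerivAt_of_isOpen isOpen_univ two_ne_zero (mem_univ p)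
  have ddphi := hphi.contDiffOn.hasDerivAt_deriv_of_isOpen isOpen_univ (mem_univ p)
  have dpsi := hpsi.hasDerivAt_of_isOpen isOpen_Ioo two_ne_zero hp
  have ddpsi := hpsi.hasDerivAt_deriv_of_isOpen isOpen_Ioo hp
  have dvpi : deriv (fun q => v q * pi q) p = 2 * deriv (fun q => 1 / 2 * v q * pi q) p := by
    rw [← (da.const_mul 2).deriv]
    congr 1
    ext q
    ring
  have hpi : pi p ≠ 0 := (HP.pos p hp).ne'
  refine (((da.mul (dpsi.mul ddphi)).sub (dphi.mul (da.mul ddpsi))).add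
    ((dphi.mul dpsi).mul (dmupi.sub dda))).congr_deriv ?_
  have hode := HP.ode p hp
  simp only [fwdGen, bwdGen, bwdDrift, dvpi, Pi.mul_apply, Pi.sub_apply]
  -- otherwise `field_simp` also rewrites `1 / 2 * v q * pi q` under the `deriv` binders
  generalize deriv (deriv fun q => 1 / 2 * v q * pi q) p = a'' at hode ⊢
  generalize deriv (fun q => 1 / 2 * v q * pi q) p = a' at hode ⊢
  field_simp
  linear_combination (-2 * phi p * psi p) * hode

theorem ModelAssumptions.continuousOn_fwdGen (H : ModelAssumptions lam v mu w0) {phi : ℝ → ℝ}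
    (hphi : ContDiff ℝ 2 phi) : ContinuousOn (fwdGen lam v mu w0 phi) (Icc 0 1) := by
  obtain ⟨hv, hmu, hw0⟩ := H.contDiffOn (n := 0)
  have hdphi := hphi.continuous_deriv one_le_two
  have hddphi := (hphi.iterate_deriv' 0 2).continuous
  simp only [Function.iterate_succ, Function.iterate_zero] at hddphi
  have hphi₀ := hphi.continuous
  unfold fwdGen
  fun_prop

theorem StationaryDensity.aestronglyMeasurable_bwdGen (HP : StationaryDensity lam v mu w0 pi)
    (hv : ContinuousOn v (Ioo 0 1)) (hmu : ContinuousOn mu (Ioo 0 1)) (psi : ℝ → ℝ) :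
    AEStronglyMeasurable (bwdGen v mu pi psi) (volume.restrict (Ioo 0 1)) := by
  have hv' := hv.aestronglyMeasurable (μ := volume) measurableSet_Ioo
  have hmu' := hmu.aestronglyMeasurable (μ := volume) measurableSet_Ioo
  have hpi' := HP.contDiffOn.continuousOn.aestronglyMeasurable (μ := volume) measurableSet_Ioo
  have hd (f : ℝ → ℝ) := (measurable_deriv f).aestronglyMeasurable (μ := volume.restrict (Ioo 0 1))
  exact ((aestronglyMeasurable_const.mul hv').mul (hd _)).add
    ((hmu'.neg.add ((hd _).div₀ hpi')).mul (hd _))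

theorem StationaryDensity.integrableOn_mul_bwdGen (HP : StationaryDensity lam v mu w0 pi)
    (hv : ContinuousOn v (Ioo 0 1)) (hmu : ContinuousOn mu (Ioo 0 1)) {phi psi : ℝ → ℝ}
    (hphi : ContinuousOn phi (Icc 0 1))
    (hbdd : ∃ M : ℝ, ∀ p ∈ Ioo (0 : ℝ) 1, |bwdGen v mu pi psi p| ≤ M) :
    IntegrableOn (fun p => phi p * bwdGen v mu pi psi p * pi p) (Ioo 0 1) := by
  obtain ⟨M, hM⟩ := hbdd
  obtain ⟨C, hC⟩ := isCompact_Icc.exists_bound_of_continuousOn hphi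
  refine HP.integrableOn.bdd_mul (c := C * M)
    (((hphi.mono Ioo_subset_Icc_self).aestronglyMeasurable measurableSet_Ioo).mul
      (HP.aestronglyMeasurable_bwdGen hv hmu psi))
    ((ae_restrict_iff' measurableSet_Ioo).mpr (.of_forall fun p hp => ?_))
  rw [norm_mul, Real.norm_eq_abs (bwdGen _ _ _ _ _)]
  exact mul_le_mul (hC p (Ioo_subset_Icc_self hp)) (hM p hp) (abs_nonneg _)
    ((norm_nonneg _).trans (hC p (Ioo_subset_Icc_self hp)))

theorem StationaryDensity.integrableOn_mul_weight (HP : StationaryDensity lam v mu w0 pi)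
    {w psi : ℝ → ℝ} (hw : ContinuousOn w (Icc 0 1)) (hpsi : ContinuousOn psi (Icc 0 1))
    (k : ℝ) : IntegrableOn (fun p => psi p * (k * w p * pi p)) (Ioo 0 1) := by
  simpa only [mul_assoc] using HP.integrableOn_mul (c := fun p => psi p * (k * w p))
    (hpsi.mul (continuousOn_const.mul hw))

theorem StationaryDensity.setIntegral_sub_mul_weight (HP : StationaryDensity lam v mu w0 pi)
    {w psi : ℝ → ℝ} (hw : ContinuousOn w (Icc 0 1)) (hpsi : ContinuousOn psi (Icc 0 1))
    (k c : ℝ) :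
    ∫ p in Ioo 0 1, (psi p - c) * (k * w p * pi p)
      = (∫ p in Ioo 0 1, psi p * (k * w p * pi p)) - c * (k * ∫ p in Ioo 0 1, w p * pi p) := by
  have hwpi : IntegrableOn (fun p => k * w p * pi p) (Ioo 0 1) :=
    HP.integrableOn_mul (continuousOn_const.mul hw)
  simp_rw [sub_mul]
  rw [integral_sub (HP.integrableOn_mul_weight hw hpsi k) (hwpi.const_mul c), integral_const_mul]
  simp_rw [mul_assoc k]
  rw [integral_const_mul]

theorem StationaryDensity.tendsto_concomitant_zero (HP : StationaryDensity lam v mu w0 pi)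
    (hw0 : ContinuousOn w0 (Icc 0 1)) {phi psi : ℝ → ℝ} (hphi : ContDiff ℝ 2 phi)
    (hpsi : ContinuousOn psi (Icc 0 1))
    (hb0 : Tendsto (fun p => 1 / 2 * v p * pi p * deriv psi p) (𝓝[Ioo (0 : ℝ) 1] 0)
      (𝓝 (-(∫ p in Ioo (0 : ℝ) 1, (psi p - psi 0) * (lam * w0 p * pi p))))) :
    Tendsto (concomitant v mu pi phi psi) (𝓝[>] 0)
      (𝓝 (phi 0 * ∫ p in Ioo 0 1, psi p * (lam * w0 p * pi p))) := by
  rw [← nhdsWithin_Ioo_eq_nhdsGT zero_lt_one]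
  convert tendsto_concomitant HP.vpi_zero HP.bc_zero hb0
    ((hphi.continuous.tendsto 0).mono_left nhdsWithin_le_nhds)
    (((hphi.continuous_deriv one_le_two).tendsto 0).mono_left nhdsWithin_le_nhds)
    ((hpsi 0 ⟨le_rfl, zero_le_one⟩).mono_left (nhdsWithin_mono _ Ioo_subset_Icc_self)) using 2
  rw [HP.setIntegral_sub_mul_weight hw0 hpsi]
  ring

theorem StationaryDensity.tendsto_concomitant_one (HP : StationaryDensity lam v mu w0 pi)
    (hw0 : ContinuousOn w0 (Icc 0 1)) {phi psi : ℝ → ℝ} (hphi : ContDiff ℝ 2 phi)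
    (hpsi : ContinuousOn psi (Icc 0 1))
    (hb1 : Tendsto (fun p => 1 / 2 * v p * pi p * deriv psi p) (𝓝[Ioo (0 : ℝ) 1] 1)
      (𝓝 (∫ p in Ioo (0 : ℝ) 1, (psi p - psi 1) * (lam * (1 - w0 p) * pi p)))) :
    Tendsto (concomitant v mu pi phi psi) (𝓝[<] 1)
      (𝓝 (-(phi 1 * ∫ p in Ioo 0 1, psi p * (lam * (1 - w0 p) * pi p)))) := by
  rw [← nhdsWithin_Ioo_eq_nhdsLT zero_lt_one]
  convert tendsto_concomitant HP.vpi_one HP.bc_one hb1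
    ((hphi.continuous.tendsto 1).mono_left nhdsWithin_le_nhds)
    (((hphi.continuous_deriv one_le_two).tendsto 1).mono_left nhdsWithin_le_nhds)
    ((hpsi 1 ⟨zero_le_one, le_rfl⟩).mono_left (nhdsWithin_mono _ Ioo_subset_Icc_self)) using 2
  rw [HP.setIntegral_sub_mul_weight (w := fun p => 1 - w0 p) (continuousOn_const.sub hw0) hpsi]
  ring

end Model

/-- the adjoint relation between the forward generator `G` and the
backward diffusion operator `Ãψ = (1/2)vψ'' + μ̃ψ'` for `ψ` satisfying the non-local
boundary conditions defining the core of the backward generator. -/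
theorem stmt_15 (lam : ℝ) (v mu w0 pi : ℝ → ℝ)
    (H : ModelAssumptions lam v mu w0)
    (HP : StationaryDensity lam v mu w0 pi)
    (phi psi : ℝ → ℝ)
    (hphi : ContDiff ℝ 2 phi)
    (hpsi_cont : ContinuousOn psi (Icc (0 : ℝ) 1))
    (hpsi_C2 : ContDiffOn ℝ 2 psi (Ioo (0 : ℝ) 1))
    (hbdd : ∃ M : ℝ, ∀ p ∈ Ioo (0 : ℝ) 1,
      |1 / 2 * v p * deriv (deriv psi) p + bwdDrift v mu pi p * deriv psi p| ≤ M)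
    (hb0 : Tendsto (fun p => 1 / 2 * v p * pi p * deriv psi p) (𝓝[Ioo (0 : ℝ) 1] 0)
      (𝓝 (-(∫ p in Ioo (0 : ℝ) 1, (psi p - psi 0) * (lam * w0 p * pi p)))))
    (hb1 : Tendsto (fun p => 1 / 2 * v p * pi p * deriv psi p) (𝓝[Ioo (0 : ℝ) 1] 1)
      (𝓝 (∫ p in Ioo (0 : ℝ) 1, (psi p - psi 1) * (lam * (1 - w0 p) * pi p)))) :
    (∫ p in Ioo (0 : ℝ) 1, fwdGen lam v mu w0 phi p * psi p * pi p)
      = ∫ p in Ioo (0 : ℝ) 1,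
          phi p * (1 / 2 * v p * deriv (deriv psi) p + bwdDrift v mu pi p * deriv psi p)
            * pi p := by
  obtain ⟨hv, hmu, hw0⟩ := H.contDiffOn (n := 2)
  have hG : IntegrableOn (fun p => fwdGen lam v mu w0 phi p * psi p * pi p) (Ioo 0 1) :=
    HP.integrableOn_mul ((H.continuousOn_fwdGen hphi).mul hpsi_cont)
  have hbwd := HP.integrableOn_mul_bwdGen (hv.continuousOn.mono Ioo_subset_Icc_self)
    (hmu.continuousOn.mono Ioo_subset_Icc_self) hphi.continuous.continuousOn hbdd
  have hjump₀ := HP.integrableOn_mul_weight hw0.continuousOn hpsi_cont lam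
  have hjump₁ := HP.integrableOn_mul_weight (w := fun p => 1 - w0 p)
    (continuousOn_const.sub hw0.continuousOn) hpsi_cont lam
  have hjump := (hjump₀.const_mul (phi 0)).add (hjump₁.const_mul (phi 1))
  have key := integral_Ioo_eq_sub_of_hasDerivAt_of_tendsto zero_lt_one
    (fun p hp => HP.hasDerivAt_concomitant (hv.mono Ioo_subset_Icc_self)
      ((hmu.mono Ioo_subset_Icc_self).of_le one_le_two) hphi hpsi_C2 hp)
    ((hG.sub hbwd).sub hjump)
    (HP.tendsto_concomitant_zero hw0.continuousOn hphi hpsi_cont hb0)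
    (HP.tendsto_concomitant_one hw0.continuousOn hphi hpsi_cont hb1)
  rw [integral_sub (by exact hG.sub hbwd) (by exact hjump), integral_sub hG hbwd,
    integral_add (hjump₀.const_mul _) (hjump₁.const_mul _), integral_const_mul,
    integral_const_mul] at key
  change _ = ∫ p in Ioo 0 1, phi p * bwdGen v mu pi psi p * pi p
  linear_combination key
end
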